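/- If f_G divides f_H (as polynomials), then α(f_G) ≤ α(f_H), hence AT(G) ≤ AT(H). -/

import Mathlib

attribute [local instance] Classical.propDecidable

/-- `alphaP Q` is the minimum `k` such that some monomial of `Q` with nonzero
coefficient has total degree equal to `Q.totalDegree` and every individual
variable exponent at most `k`. -/
noncomputable def alphaP {n : ℕ} (Q : MvPolynomial (Fin n) ℤ) : ℕ :=
  sInf {k | ∃ m ∈ Q.support, (∑ i, m i) = Q.totalDegree ∧ ∀ i, m i ≤ k}

/-- The graph polynomial `∏_{i<j, {v_i,v_j} ∈ E} (x_i - x_j)`. -/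
noncomputable def graphPoly {n : ℕ} (G : SimpleGraph (Fin n)) : MvPolynomial (Fin n) ℤ :=
  ∏ p ∈ Finset.univ.filter (fun p : Fin n × Fin n => p.1 < p.2 ∧ G.Adj p.1 p.2),
    (MvPolynomial.X p.1 - MvPolynomial.X p.2)

/-- The Alon–Tarsi number `AT(G) = α(f_G) + 1`. -/
noncomputable def AT {n : ℕ} (G : SimpleGraph (Fin n)) : ℕ := alphaP (graphPoly G) + 1

/-!
Over a domain, `totalDegree (p * q) = totalDegree p + totalDegree q`. A monomial `m` of top
degree in `p * q` is a sum `a + b` of monomials of `p` and `q`; since neither exceeds its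
polynomial's total degree, `a` has top degree in `p`, and `a ≤ m` bounds its exponents by those
of `m`. Hence `α(p) ≤ α(p * q)`; graph polynomials are nonzero, so this applies to `f_G ∣ f_H`.
-/

namespace MvPolynomial

variable {σ R : Type*} [CommSemiring R] {p q : MvPolynomial σ R}

lemma degree_le_totalDegree {m : σ →₀ ℕ} (hm : m ∈ p.support) : m.degree ≤ p.totalDegree :=
  le_totalDegree hm

lemma exists_mem_support_degree_eq_totalDegree (hp : p ≠ 0) :
    ∃ m ∈ p.support, m.degree = p.totalDegree := by
  obtain ⟨m, hm, hsup⟩ :=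
    Finset.exists_mem_eq_sup p.support (support_nonempty.mpr hp) (fun s => s.sum fun _ e => e)
  exact ⟨m, hm, hsup.symm⟩

lemma exists_le_of_mem_support_mul_of_degree_eq [NoZeroDivisors R] {m : σ →₀ ℕ}
    (hm : m ∈ (p * q).support) (hdeg : m.degree = (p * q).totalDegree) :
    ∃ a ∈ p.support, a.degree = p.totalDegree ∧ a ≤ m := by
  classical
  obtain ⟨a, ha, b, hb, rfl⟩ := Finset.mem_add.mp (support_mul p q hm)
  have hp : p ≠ 0 := by rintro rfl; simp at ha
  have hq : q ≠ 0 := by rintro rfl; simp at hb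
  rw [totalDegree_mul_of_isDomain hp hq, map_add] at hdeg
  have := degree_le_totalDegree ha
  have := degree_le_totalDegree hb
  exact ⟨a, ha, by omega, le_add_right le_rfl⟩

end MvPolynomial

open MvPolynomial

lemma exists_mem_support_le_alphaP {n : ℕ} {Q : MvPolynomial (Fin n) ℤ} (hQ : Q ≠ 0) :
    ∃ m ∈ Q.support, m.degree = Q.totalDegree ∧ ∀ i, m i ≤ alphaP Q := by
  have hne : {k | ∃ m ∈ Q.support, (∑ i, m i) = Q.totalDegree ∧ ∀ i, m i ≤ k}.Nonempty := by
    obtain ⟨m, hm, hdeg⟩ := exists_mem_support_degree_eq_totalDegree hQ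
    rw [Finsupp.degree_eq_sum] at hdeg
    exact ⟨∑ i, m i, m, hm, hdeg, fun i => Finset.single_le_sum (by simp) (Finset.mem_univ i)⟩
  obtain ⟨m, hm, hdeg, hle⟩ := Nat.sInf_mem hne
  exact ⟨m, hm, by rwa [Finsupp.degree_eq_sum], hle⟩

lemma alphaP_le_of_dvd {n : ℕ} {P Q : MvPolynomial (Fin n) ℤ} (hPQ : P ∣ Q) (hQ : Q ≠ 0) :
    alphaP P ≤ alphaP Q := by
  obtain ⟨R, rfl⟩ := hPQ
  obtain ⟨m, hm, hmdeg, hmle⟩ := exists_mem_support_le_alphaP hQ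
  obtain ⟨a, ha, hadeg, ham⟩ := exists_le_of_mem_support_mul_of_degree_eq hm hmdeg
  rw [Finsupp.degree_eq_sum] at hadeg
  exact Nat.sInf_le ⟨a, ha, hadeg, fun i => (ham i).trans (hmle i)⟩

lemma graphPoly_ne_zero {n : ℕ} (G : SimpleGraph (Fin n)) : graphPoly G ≠ 0 := by
  refine Finset.prod_ne_zero_iff.mpr fun e he => sub_ne_zero_of_ne fun hX => ?_
  exact (Finset.mem_filter.mp he).2.1.ne (X_injective hX)

/-- If `f_G` divides `f_H`, then `α(f_G) ≤ α(f_H)` and hence `AT(G) ≤ AT(H)`. -/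
theorem alpha_AT_of_dvd {n : ℕ} (G H : SimpleGraph (Fin n))
    (h : graphPoly G ∣ graphPoly H) :
    alphaP (graphPoly G) ≤ alphaP (graphPoly H) ∧ AT G ≤ AT H := by
  have hα := alphaP_le_of_dvd h (graphPoly_ne_zero H)
  exact ⟨hα, Nat.add_le_add_right hα 1⟩
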